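/- arXiv:2511.20412 — 2 statements merged into one kernel-verified Lean document; each statement's English description precedes it below -/
import Mathlib

section
/- Identifiability (case α0 ≠ 0): under Assumption (C4) with A = E[X^T X]^{-1} E[X^T M] = (α0/||b0||_2^2) b0 a0^T (transposed form) and Σ_X = E[X^T X] invertible, the quantities E[X^T M], E[X^T Y], E[M^T Y] uniquely determine the unit vectors â0 = a0/||a0||_2 and b̂0 = b0/||b0||_2, as well as τ0||a0||_2 and η0||b0||_2, provided τ0 = γ0 + α0η0 ≠ 0 and E[ε_M^T ε_M] > 0. -/
open Matrix

private lemma rank1_transpose_mulVec {m q : ℕ} (t : ℝ) (u v : Fin m → ℝ) (b : Fin q → ℝ) :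
    (Matrix.of fun i j => t * u i * b j)ᵀ.mulVec v = (t * (v ⬝ᵥ u)) • b := by
  funext j
  simp only [Matrix.mulVec, dotProduct, Matrix.transpose_apply, Matrix.of_apply,
    Pi.smul_apply, smul_eq_mul, Finset.mul_sum, Finset.sum_mul]
  exact Finset.sum_congr rfl fun i _ => by ring

/-- Identifiability in the case `α0 ≠ 0`: the population moments
`E[XᵀM]`, `E[XᵀY]`, `E[MᵀY]` uniquely determine the unit directions
`â0, b̂0` together with the scales `τ0‖a0‖` and `η0‖b0‖`; equivalently, any
two admissible parameterizations generating the same moments satisfy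
`τ0 • a0 = τ1 • a1` and `η0 • b0 = η1 • b1`. -/
theorem stmt12 {m q : ℕ}
    (SigX : Matrix (Fin m) (Fin m) ℝ) (SigM : Matrix (Fin q) (Fin q) ℝ)
    (hSigX : SigX.PosDef) (hSigM : SigM.PosDef)
    (a0 a1 : Fin m → ℝ) (b0 b1 : Fin q → ℝ)
    (α0 γ0 η0 α1 γ1 η1 : ℝ)
    (ha0 : a0 ≠ 0) (hb0 : b0 ≠ 0) (ha1 : a1 ≠ 0) (hb1 : b1 ≠ 0)
    (hα0 : α0 ≠ 0) (hα1 : α1 ≠ 0)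
    (hτ0 : γ0 + α0 * η0 ≠ 0) (hτ1 : γ1 + α1 * η1 ≠ 0)
    -- `E[ε_Mᵀ ε_M] > 0` expressed through second moments:
    (hε0 : 0 < b0 ⬝ᵥ SigM.mulVec b0 - α0 ^ 2 * (a0 ⬝ᵥ SigX.mulVec a0))
    (hε1 : 0 < b1 ⬝ᵥ SigM.mulVec b1 - α1 ^ 2 * (a1 ⬝ᵥ SigX.mulVec a1))
    (SigXM : Matrix (Fin m) (Fin q) ℝ) (vXY : Fin m → ℝ) (vMY : Fin q → ℝ)
    -- both parameterizations generate the same observed moments: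
    (hXM0 : SigXM = Matrix.of fun i j => (α0 / (b0 ⬝ᵥ b0)) * SigX.mulVec a0 i * b0 j)
    (hXM1 : SigXM = Matrix.of fun i j => (α1 / (b1 ⬝ᵥ b1)) * SigX.mulVec a1 i * b1 j)
    (hXY0 : vXY = (γ0 + α0 * η0) • SigX.mulVec a0)
    (hXY1 : vXY = (γ1 + α1 * η1) • SigX.mulVec a1)
    (hMY0 : vMY = γ0 • SigXMᵀ.mulVec a0 + η0 • SigM.mulVec b0)
    (hMY1 : vMY = γ1 • SigXMᵀ.mulVec a1 + η1 • SigM.mulVec b1) :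
    (γ0 + α0 * η0) • a0 = (γ1 + α1 * η1) • a1 ∧ η0 • b0 = η1 • b1 := by
  have hpos : ∀ v : Fin m → ℝ, v ≠ 0 → 0 < v ⬝ᵥ SigX.mulVec v := by
    intro v hv
    simpa using hSigX.dotProduct_mulVec_pos hv
  obtain ⟨τ0, hτ0def⟩ : ∃ t, t = γ0 + α0 * η0 := ⟨_, rfl⟩
  obtain ⟨τ1, hτ1def⟩ : ∃ t, t = γ1 + α1 * η1 := ⟨_, rfl⟩
  rw [← hτ0def] at hXY0 hτ0 ⊢
  rw [← hτ1def] at hXY1 hτ1 ⊢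
  obtain ⟨w, hwdef⟩ : ∃ w, w = SigX.mulVec a0 := ⟨_, rfl⟩
  rw [← hwdef] at hXY0 hXM0 hε0
  have hs0 : 0 < a0 ⬝ᵥ w := by rw [hwdef]; exact hpos a0 ha0
  -- first conjunct
  have hXYeq : τ0 • w = τ1 • SigX.mulVec a1 := hXY0.symm.trans hXY1
  have h1 : τ0 • a0 = τ1 • a1 := by
    by_contra hne
    have hv : τ0 • a0 - τ1 • a1 ≠ 0 := sub_ne_zero.mpr hne
    have hz : SigX.mulVec (τ0 • a0 - τ1 • a1) = 0 := by
      rw [Matrix.mulVec_sub, Matrix.mulVec_smul, Matrix.mulVec_smul, ← hwdef, hXYeq,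
        sub_self]
    have hp := hpos _ hv
    rw [hz, dotProduct_zero] at hp
    exact lt_irrefl 0 hp
  refine ⟨h1, ?_⟩
  -- setup for second conjunct
  obtain ⟨r, hrdef⟩ : ∃ t, t = τ0 / τ1 := ⟨_, rfl⟩
  have hr0 : r ≠ 0 := by rw [hrdef]; exact div_ne_zero hτ0 hτ1
  have ha1r : a1 = r • a0 := by
    have h2 : (τ1⁻¹ * τ1) • a1 = (τ1⁻¹ * τ0) • a0 := by
      rw [mul_smul, mul_smul, ← h1]
    rw [inv_mul_cancel₀ hτ1, one_smul] at h2
    rw [h2, hrdef, div_eq_inv_mul]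
  have hw1 : SigX.mulVec a1 = r • w := by rw [ha1r, Matrix.mulVec_smul, hwdef]
  have hB0nn : 0 ≤ b0 ⬝ᵥ b0 := by
    simp only [dotProduct]
    exact Finset.sum_nonneg fun i _ => mul_self_nonneg _
  have hB0 : 0 < b0 ⬝ᵥ b0 :=
    lt_of_le_of_ne hB0nn fun h => hb0 (dotProduct_self_eq_zero.mp h.symm)
  have hB1nn : 0 ≤ b1 ⬝ᵥ b1 := by
    simp only [dotProduct]
    exact Finset.sum_nonneg fun i _ => mul_self_nonneg _
  have hB1 : 0 < b1 ⬝ᵥ b1 :=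
    lt_of_le_of_ne hB1nn fun h => hb1 (dotProduct_self_eq_zero.mp h.symm)
  obtain ⟨T0, hT0def⟩ : ∃ t, t = α0 / (b0 ⬝ᵥ b0) := ⟨_, rfl⟩
  obtain ⟨T1, hT1def⟩ : ∃ t, t = α1 / (b1 ⬝ᵥ b1) := ⟨_, rfl⟩
  rw [← hT0def] at hXM0
  rw [← hT1def] at hXM1
  have hT0 : T0 ≠ 0 := by rw [hT0def]; exact div_ne_zero hα0 hB0.ne'
  have hT1 : T1 ≠ 0 := by rw [hT1def]; exact div_ne_zero hα1 hB1.ne'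
  have hT0B : T0 * (b0 ⬝ᵥ b0) = α0 := by rw [hT0def]; exact div_mul_cancel₀ _ hB0.ne'
  have hT1B : T1 * (b1 ⬝ᵥ b1) = α1 := by rw [hT1def]; exact div_mul_cancel₀ _ hB1.ne'
  have hwne : w ≠ 0 := by
    intro h
    rw [h, dotProduct_zero] at hs0
    exact lt_irrefl 0 hs0
  obtain ⟨i0, hi0⟩ := Function.ne_iff.mp hwne
  simp only [Pi.zero_apply] at hi0
  have hXMeq : ∀ i j, T0 * w i * b0 j = T1 * (r * w i) * b1 j := by
    intro i j
    have h := hXM0.symm.trans hXM1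
    have h2 := congrFun (congrFun h i) j
    simp only [Matrix.of_apply] at h2
    rw [hw1] at h2
    simpa [Pi.smul_apply, smul_eq_mul] using h2
  have hbprop : ∀ j, T0 * b0 j = (T1 * r) * b1 j := by
    intro j
    have h := hXMeq i0 j
    apply mul_left_cancel₀ hi0
    linear_combination h
  obtain ⟨c, hcdef⟩ : ∃ t, t = T0 / (T1 * r) := ⟨_, rfl⟩
  have hc0 : c ≠ 0 := by rw [hcdef]; exact div_ne_zero hT0 (mul_ne_zero hT1 hr0)
  have hcT : c * (T1 * r) = T0 := by
    rw [hcdef]; exact div_mul_cancel₀ _ (mul_ne_zero hT1 hr0)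
  have hb1c : b1 = c • b0 := by
    funext j
    have h := hbprop j
    simp only [Pi.smul_apply, smul_eq_mul]
    apply mul_left_cancel₀ (mul_ne_zero hT1 hr0)
    linear_combination -h - (b0 j) * hcT
  have hB1c : b1 ⬝ᵥ b1 = c ^ 2 * (b0 ⬝ᵥ b0) := by
    rw [hb1c, smul_dotProduct, dotProduct_smul, smul_eq_mul, smul_eq_mul]; ring
  have hT1B' : T1 * (c ^ 2 * (b0 ⬝ᵥ b0)) = α1 := by rw [← hB1c]; exact hT1B
  have hαc : α0 * c = α1 * r := by
    linear_combination (-(c * (b0 ⬝ᵥ b0))) * hcT - c * hT0B + r * hT1B'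
  have hs1 : a1 ⬝ᵥ SigX.mulVec a1 = r ^ 2 * (a0 ⬝ᵥ w) := by
    rw [hw1, ha1r, smul_dotProduct, dotProduct_smul, smul_eq_mul, smul_eq_mul]; ring
  -- transpose mulVec computations
  have hT0v : SigXMᵀ.mulVec a0 = (T0 * (a0 ⬝ᵥ w)) • b0 := by
    rw [hXM0]; exact rank1_transpose_mulVec T0 w a0 b0
  have hT1v : SigXMᵀ.mulVec a1 = (T1 * (r ^ 2 * (a0 ⬝ᵥ w))) • b1 := by
    rw [hXM1, rank1_transpose_mulVec, hs1]
  have hMY : γ0 • ((T0 * (a0 ⬝ᵥ w)) • b0) + η0 • SigM.mulVec b0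
      = γ1 • ((T1 * (r ^ 2 * (a0 ⬝ᵥ w))) • b1) + η1 • SigM.mulVec b1 := by
    rw [← hT0v, ← hT1v, ← hMY0, ← hMY1]
  have hkeyvec : ∀ j, (η0 - c * η1) * (SigM.mulVec b0) j
      = (γ1 * (T1 * (r ^ 2 * (a0 ⬝ᵥ w))) * c - γ0 * (T0 * (a0 ⬝ᵥ w))) * b0 j := by
    intro j
    rw [hb1c, Matrix.mulVec_smul] at hMY
    have h := congrFun hMY j
    simp only [Pi.add_apply, Pi.smul_apply, smul_eq_mul] at h
    linear_combination h
  have hrτ : τ0 = r * τ1 := by rw [hrdef]; field_simp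
  have h3 : r * γ1 - γ0 = α0 * (η0 - c * η1) := by
    have e4 : γ0 + α0 * η0 = r * (γ1 + α1 * η1) := by
      rw [← hτ0def, ← hτ1def]; exact hrτ
    linear_combination -e4 + η1 * hαc
  have h2 : c * T1 * (r ^ 2 * (a0 ⬝ᵥ w)) = r * (T0 * (a0 ⬝ᵥ w)) := by
    apply mul_left_cancel₀ (mul_ne_zero hc0 hB0.ne')
    linear_combination (r ^ 2 * (a0 ⬝ᵥ w)) * hT1B' - (c * r * (a0 ⬝ᵥ w)) * hT0B
      - (r * (a0 ⬝ᵥ w)) * hαc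
  have hscal : γ1 * (T1 * (r ^ 2 * (a0 ⬝ᵥ w))) * c - γ0 * (T0 * (a0 ⬝ᵥ w))
      = (η0 - c * η1) * (α0 * (T0 * (a0 ⬝ᵥ w))) := by
    linear_combination γ1 * h2 + (T0 * (a0 ⬝ᵥ w)) * h3
  by_cases hd : η0 - c * η1 = 0
  · rw [hb1c, smul_smul, show η1 * c = η0 by linarith]
  · exfalso
    have hSM : SigM.mulVec b0 = (α0 * (T0 * (a0 ⬝ᵥ w))) • b0 := by
      funext j
      have h := hkeyvec j
      rw [hscal, mul_assoc] at h
      have h5 := mul_left_cancel₀ hd h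
      simpa [Pi.smul_apply, smul_eq_mul] using h5
    have hdot : b0 ⬝ᵥ SigM.mulVec b0 = α0 ^ 2 * (a0 ⬝ᵥ w) := by
      rw [hSM, dotProduct_smul, smul_eq_mul]
      linear_combination (α0 * (a0 ⬝ᵥ w)) * hT0B
    rw [hdot] at hε0
    linarith
end

section
/- Identifiability (case α0 = 0): if E[X^T M] = 0, Σ_X = E[X^T X] and Σ_M = E[M^T M] are invertible, γ0 ≠ 0 and η0 ≠ 0, then η0 b0 = Σ_M^{-1} E[M^T Y] and γ0 a0 = Σ_X^{-1} E[X^T Y], so the moments E[X^T Y] and E[M^T Y] uniquely determine γ0||a0||_2, η0||b0||_2, and the unit vectors â0, b̂0. -/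
open Matrix

/-- Identifiability in the case `α0 = 0` (`E[XᵀM] = 0`): with `SigX, SigM`
positive definite and `γ0, η0 ≠ 0`, the moments `E[XᵀY]` and `E[MᵀY]`
determine `η0 b0 = SigM⁻¹ E[MᵀY]` and `γ0 a0 = SigX⁻¹ E[XᵀY]`. -/
theorem stmt13 {m q : ℕ}
    (SigX : Matrix (Fin m) (Fin m) ℝ) (SigM : Matrix (Fin q) (Fin q) ℝ)
    (SigXM : Matrix (Fin m) (Fin q) ℝ)
    (hSigX : SigX.PosDef) (hSigM : SigM.PosDef) (hXM : SigXM = 0)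
    (a0 : Fin m → ℝ) (b0 : Fin q → ℝ) (γ0 η0 : ℝ)
    (ha0 : a0 ≠ 0) (hb0 : b0 ≠ 0) (hγ : γ0 ≠ 0) (hη : η0 ≠ 0)
    (vXY : Fin m → ℝ) (vMY : Fin q → ℝ)
    (hXY : vXY = γ0 • SigX.mulVec a0 + η0 • SigXM.mulVec b0)
    (hMY : vMY = γ0 • SigXMᵀ.mulVec a0 + η0 • SigM.mulVec b0) :
    η0 • b0 = SigM⁻¹.mulVec vMY ∧ γ0 • a0 = SigX⁻¹.mulVec vXY := by
  subst hXM hXY hMY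
  have hM : IsUnit SigM.det := isUnit_iff_ne_zero.mpr hSigM.det_pos.ne'
  have hX : IsUnit SigX.det := isUnit_iff_ne_zero.mpr hSigX.det_pos.ne'
  constructor
  · simp [mulVec_smul, mulVec_mulVec, Matrix.nonsing_inv_mul _ hM, mulVec_add]
  · simp [mulVec_smul, mulVec_mulVec, Matrix.nonsing_inv_mul _ hX, mulVec_add]
end
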